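/- arXiv:2511.03887 — 2 statements merged into one kernel-verified Lean document; each statement's English description precedes it below -/
import Mathlib

section
/- Let G be a topological group such that for every identity neighborhood U ⊆ G there exists a countable set C ⊆ G with U ∪ C generating G as a group. If A ⊆ G is coarsely bounded in G, then A satisfies Rosendal's criterion: for every identity neighborhood U ⊆ G there exist a finite subset F ⊆ G and k ∈ ℕ such that every a ∈ A can be written as a product a = f₁u₁⋯f_ℓu_ℓ with ℓ ≤ k, f_i ∈ F and u_i ∈ U. -/
open Pointwise

/-- A continuous, left-invariant pseudometric on a topological group `G`. -/
structure IsContLeftInvPseudometric (G : Type*) [Group G] [TopologicalSpace G]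
    (d : G → G → ℝ) : Prop where
  continuous : Continuous fun p : G × G => d p.1 p.2
  self : ∀ x : G, d x x = 0
  symm : ∀ x y : G, d x y = d y x
  nonneg : ∀ x y : G, 0 ≤ d x y
  triangle : ∀ x y z : G, d x z ≤ d x y + d y z
  left_inv : ∀ g x y : G, d (g * x) (g * y) = d x y

/-- A subset `A` of a topological group `G` is coarsely bounded in `G` if it has
finite diameter with respect to every continuous left-invariant pseudometric on `G`. -/
def IsCoarselyBounded (G : Type*) [Group G] [TopologicalSpace G] (A : Set G) : Prop :=
  ∀ d : G → G → ℝ, IsContLeftInvPseudometric G d →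
    ∃ M : ℝ, ∀ a ∈ A, ∀ b ∈ A, d a b ≤ M

/-- The word length of `g` with respect to a generating set `S`: the least `n` such
that `g` is a product of `n` elements of `S`. -/
noncomputable def wordLength {G : Type*} [Group G] (S : Set G) (g : G) : ℕ :=
  sInf {n : ℕ | ∃ l : List G, l.length = n ∧ (∀ s ∈ l, s ∈ S) ∧ l.prod = g}

/-- `G` admits a geometry if there is a continuous left-invariant pseudometric on `G`
which dominates, in the coarse Lipschitz sense, every continuous left-invariant
pseudometric on `G`. -/
def AdmitsAGeometry (G : Type*) [Group G] [TopologicalSpace G] : Prop :=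
  ∃ d : G → G → ℝ, IsContLeftInvPseudometric G d ∧
    ∀ d' : G → G → ℝ, IsContLeftInvPseudometric G d' →
      ∃ L K : ℝ, 0 < L ∧ 0 ≤ K ∧ ∀ g h : G, d' g h ≤ L * d g h + K

/-!
A Birkhoff–Kakutani argument with a two-sided chain. Given `U`, choose symmetric identity
neighbourhoods `U ⊇ W 0 ⊇ W 1 ⊇ ⋯` with `(W (n+1))³ ⊆ W n`, and a sequence `c` whose range
together with `W 0` generates `G`. Growing `W 0` by cubing and adjoining `c n, (c n)⁻¹` at step
`n` extends the `W n` to a chain `E : ℤ → Set G` with `(E n)³ ⊆ E (n+1)` that exhausts `G`.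
Its gauge `ρ g = inf {2 ^ n | g ∈ E n}` satisfies `ρ (x y z) ≤ 2 max (ρ x, ρ y, ρ z)`, so the
chain pseudometric of `(x, y) ↦ ρ (x⁻¹ y)` is left invariant, continuous (the `W n` are
neighbourhoods of `1`) and within a factor `2` of the gauge. A coarsely bounded set is bounded
for it, hence lies in some `E n` with `n ≥ 0`, whose elements are words of length at most `3 ^ n`
in `W 0 ⊆ U` and the finitely many `(c j)^{±1}`, `j < n`.
-/

open Set Filter Topology NNReal

theorem eq_zero_of_forall_le_two_zpow {x : ℝ≥0} (h : ∀ n : ℤ, x ≤ 2 ^ n) : x = 0 := by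
  by_contra hx
  obtain ⟨n, hn, -⟩ := exists_mem_Ioc_zpow (pos_iff_ne_zero.2 hx) one_lt_two
  exact (h n).not_gt hn

theorem PseudoMetricSpace.dist_ofPreNNDist_map_map {X : Type*} (d : X → X → ℝ≥0)
    (dist_self : ∀ x, d x x = 0) (dist_comm : ∀ x y, d x y = d y x) {f : X → X}
    (hf : Function.Surjective f) (hd : ∀ x y, d (f x) (f y) = d x y) (x y : X) :
    @dist X (PseudoMetricSpace.ofPreNNDist d dist_self dist_comm).toDist (f x) (f y) =
      @dist X (PseudoMetricSpace.ofPreNNDist d dist_self dist_comm).toDist x y := by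
  simp only [PseudoMetricSpace.dist_ofPreNNDist]
  congr 1
  refine (List.map_surjective_iff.2 hf |>.iInf_congr _ fun l => ?_).symm
  rw [← List.map_cons, ← List.map_singleton, ← List.map_append, List.zipWith_map]
  simp only [hd]

-- `sInf ∅ = 0` makes the gauge vanish off `⋃ n, E n`; hence the covering hypotheses below.
noncomputable def chainGauge {G : Type*} (E : ℤ → Set G) (g : G) : ℝ≥0 :=
  sInf ((fun n : ℤ => (2 : ℝ≥0) ^ n) '' {n | g ∈ E n})

theorem chainGauge_le_of_mem {G : Type*} {E : ℤ → Set G} {g : G} {n : ℤ} (hg : g ∈ E n) :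
    chainGauge E g ≤ 2 ^ n :=
  csInf_le (OrderBot.bddBelow _) ⟨n, hg, rfl⟩

theorem tendsto_chainGauge_nhds_one {G : Type*} [TopologicalSpace G] [One G]
    {E : ℤ → Set G} (hnhds : ∀ n, E n ∈ 𝓝 1) :
    Tendsto (chainGauge E) (𝓝 1) (𝓝 0) := by
  refine tendsto_order.2 ⟨fun a ha => (not_lt_zero ha).elim, fun ε hε => ?_⟩
  obtain ⟨n, hn, -⟩ := exists_mem_Ioc_zpow hε one_lt_two
  filter_upwards [hnhds n] with g hg using (chainGauge_le_of_mem hg).trans_lt hn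

section Group

variable {G : Type*} [Group G]

theorem subset_of_one_mem_of_mul_mul_subset {S T : Set G} (h1 : (1 : G) ∈ S)
    (h : S * S * S ⊆ T) : S ⊆ T := fun g hg => by
  simpa using h (mul_mem_mul (mul_mem_mul h1 h1) hg)

structure IsCubeChain (E : ℤ → Set G) : Prop where
  one_mem : ∀ n, (1 : G) ∈ E n
  inv_eq : ∀ n, (E n)⁻¹ = E n
  mul_mul_subset : ∀ n, E n * E n * E n ⊆ E (n + 1)

namespace IsCubeChain

variable {E : ℤ → Set G}

theorem monotone (hE : IsCubeChain E) : Monotone E :=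
  monotone_int_of_le_succ fun n =>
    subset_of_one_mem_of_mul_mul_subset (hE.one_mem n) (hE.mul_mul_subset n)

theorem inv_mem_iff (hE : IsCubeChain E) {g : G} {n : ℤ} : g⁻¹ ∈ E n ↔ g ∈ E n := by
  rw [← Set.mem_inv, hE.inv_eq]

theorem mul_mem (hE : IsCubeChain E) {x y : G} {m n : ℤ} (hx : x ∈ E m) (hy : y ∈ E n) :
    x * y ∈ E (max m n + 1) := by
  have hxy := mul_mem_mul (mul_mem_mul (hE.one_mem (max m n)) (hE.monotone (le_max_left m n) hx))
    (hE.monotone (le_max_right m n) hy)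
  simpa [mul_assoc] using hE.mul_mul_subset _ hxy

def subgroup (hE : IsCubeChain E) : Subgroup G where
  carrier := ⋃ n, E n
  mul_mem' := by
    simp only [mem_iUnion]
    rintro x y ⟨m, hx⟩ ⟨n, hy⟩
    exact ⟨_, hE.mul_mem hx hy⟩
  one_mem' := mem_iUnion.2 ⟨0, hE.one_mem 0⟩
  inv_mem' := by
    simp only [mem_iUnion]
    rintro x ⟨n, hx⟩
    exact ⟨n, hE.inv_mem_iff.2 hx⟩

theorem exists_mem_of_closure_eq_top (hE : IsCubeChain E) {S : Set G} (hS : S ⊆ ⋃ n, E n)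
    (hgen : Subgroup.closure S = ⊤) (g : G) : ∃ n, g ∈ E n :=
  mem_iUnion.1 <| (Subgroup.closure_le hE.subgroup).2 hS (hgen ▸ Subgroup.mem_top g)

theorem chainGauge_le_zpow_iff (hE : IsCubeChain E) {g : G} (hg : ∃ n, g ∈ E n) (k : ℤ) :
    chainGauge E g ≤ 2 ^ k ↔ g ∈ E k := by
  refine ⟨fun hle => ?_, chainGauge_le_of_mem⟩
  by_contra hgk
  have hlt : (2 : ℝ≥0) ^ (k + 1) ≤ chainGauge E g := by
    obtain ⟨n, hn⟩ := hg
    refine le_csInf ⟨_, n, hn, rfl⟩ ?_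
    rintro _ ⟨m, hm, rfl⟩
    exact zpow_le_zpow_right₀ one_le_two
      (Int.add_one_le_of_lt (lt_of_not_ge fun hmk => hgk (hE.monotone hmk hm)))
  exact (zpow_lt_zpow_right₀ one_lt_two (lt_add_one k)).not_ge (hlt.trans hle)

theorem chainGauge_eq_zero_or_zpow (hE : IsCubeChain E) {g : G} (hg : ∃ n, g ∈ E n) :
    chainGauge E g = 0 ∨ ∃ k : ℤ, chainGauge E g = 2 ^ k := by
  by_cases hall : ∀ n, g ∈ E n
  · exact Or.inl (eq_zero_of_forall_le_two_zpow fun n => chainGauge_le_of_mem (hall n))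
  obtain ⟨b, hb⟩ := not_forall.1 hall
  obtain ⟨k, hk, hleast⟩ := Int.exists_least_of_bdd
    ⟨b, fun n hn => le_of_lt (lt_of_not_ge fun hnb => hb (hE.monotone hnb hn))⟩ hg
  refine Or.inr ⟨k, le_antisymm (chainGauge_le_of_mem hk) (le_csInf ⟨_, k, hk, rfl⟩ ?_)⟩
  rintro _ ⟨m, hm, rfl⟩
  exact zpow_le_zpow_right₀ one_le_two (hleast m hm)

theorem chainGauge_one (hE : IsCubeChain E) : chainGauge E 1 = 0 :=
  eq_zero_of_forall_le_two_zpow fun n => chainGauge_le_of_mem (hE.one_mem n)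

theorem chainGauge_inv (hE : IsCubeChain E) (g : G) : chainGauge E g⁻¹ = chainGauge E g := by
  simp only [chainGauge, hE.inv_mem_iff]

theorem chainGauge_mul_mul_le (hE : IsCubeChain E) (hcover : ∀ g, ∃ n, g ∈ E n) (x y z : G) :
    chainGauge E (x * y * z) ≤
      2 * max (chainGauge E x) (max (chainGauge E y) (chainGauge E z)) := by
  set M := max (chainGauge E x) (max (chainGauge E y) (chainGauge E z))
  have hstep : ∀ k : ℤ, M ≤ 2 ^ k → chainGauge E (x * y * z) ≤ 2 * 2 ^ k := by
    intro k hk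
    have mem : ∀ w, chainGauge E w ≤ M → w ∈ E k := fun w hw =>
      (hE.chainGauge_le_zpow_iff (hcover w) k).1 (hw.trans hk)
    rw [← zpow_one_add₀ two_ne_zero, add_comm]
    exact chainGauge_le_of_mem <| hE.mul_mul_subset k <| mul_mem_mul
      (mul_mem_mul (mem x (le_max_left _ _)) (mem y ((le_max_left _ _).trans (le_max_right _ _))))
      (mem z ((le_max_right _ _).trans (le_max_right _ _)))
  have hM : M = 0 ∨ ∃ k : ℤ, M = 2 ^ k := by
    obtain h | h | h : M = chainGauge E x ∨ M = chainGauge E y ∨ M = chainGauge E z := by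
      rcases max_choice (chainGauge E x) (max (chainGauge E y) (chainGauge E z)) with h | h
      · exact Or.inl h
      · exact Or.inr ((max_choice _ _).imp h.trans h.trans)
    all_goals rw [h]; exact hE.chainGauge_eq_zero_or_zpow (hcover _)
  obtain hM | ⟨k, hM⟩ := hM
  · rw [hM, mul_zero]
    refine (eq_zero_of_forall_le_two_zpow fun n => ?_).le
    calc chainGauge E (x * y * z) ≤ 2 * 2 ^ (n - 1) := hstep (n - 1) (hM.le.trans zero_le)
      _ = 2 ^ n := by rw [← zpow_one_add₀ two_ne_zero, add_sub_cancel]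
  · rw [hM]
    exact hstep k hM.le

end IsCubeChain

end Group

theorem IsCoarselyBounded.exists_forall_le {G : Type*} [Group G] [TopologicalSpace G]
    {A : Set G} (hA : IsCoarselyBounded G A) {d : G → G → ℝ}
    (hd : IsContLeftInvPseudometric G d) (x : G) : ∃ R, ∀ a ∈ A, d x a ≤ R := by
  obtain rfl | ⟨a₀, ha₀⟩ := A.eq_empty_or_nonempty
  · exact ⟨0, by simp⟩
  obtain ⟨M, hM⟩ := hA d hd
  exact ⟨d x a₀ + M, fun a ha => (hd.triangle x a₀ a).trans (by linarith [hM a₀ ha₀ a ha])⟩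

section TopologicalGroup

variable {G : Type*} [Group G] [TopologicalSpace G] [IsTopologicalGroup G]

theorem continuous_of_tendsto_one {d : G → G → ℝ} (hsymm : ∀ x y, d x y = d y x)
    (htri : ∀ x y z, d x z ≤ d x y + d y z) (hinv : ∀ g x y, d (g * x) (g * y) = d x y)
    (h1 : Tendsto (d 1) (𝓝 1) (𝓝 0)) : Continuous fun p : G × G => d p.1 p.2 := by
  have hnear : ∀ x₀ : G, Tendsto (d x₀) (𝓝 x₀) (𝓝 0) := fun x₀ => by
    have hmul : Tendsto (x₀⁻¹ * ·) (𝓝 x₀) (𝓝 1) := by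
      simpa using (continuous_const_mul x₀⁻¹).tendsto x₀
    convert h1.comp hmul using 1
    funext x
    rw [Function.comp_apply, ← inv_mul_cancel x₀, hinv]
  rw [continuous_iff_continuousAt]
  rintro ⟨x₀, y₀⟩
  have hsum : Tendsto (fun p : G × G => d x₀ p.1 + d y₀ p.2) (𝓝 (x₀, y₀)) (𝓝 0) := by
    simpa using ((hnear x₀).comp (continuous_fst.tendsto (x₀, y₀))).add
      ((hnear y₀).comp (continuous_snd.tendsto (x₀, y₀)))
  refine tendsto_iff_dist_tendsto_zero.2 <| squeeze_zero (fun _ => dist_nonneg) (fun p => ?_) hsum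
  rw [Real.dist_eq, abs_sub_le_iff]
  have := htri p.1 x₀ p.2
  have := htri x₀ y₀ p.2
  have := htri x₀ p.1 y₀
  have := htri p.1 p.2 y₀
  constructor <;> simp only [hsymm p.1 x₀, hsymm p.2 y₀] at * <;> linarith

end TopologicalGroup

namespace IsCubeChain

variable {G : Type*} [Group G] {E : ℤ → Set G}

@[reducible]
noncomputable def pseudoMetricSpace (hE : IsCubeChain E) : PseudoMetricSpace G :=
  PseudoMetricSpace.ofPreNNDist (fun x y => chainGauge E (x⁻¹ * y))
    (fun x => by simp only [inv_mul_cancel, hE.chainGauge_one])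
    (fun x y => by rw [← hE.chainGauge_inv, mul_inv_rev, inv_inv])

noncomputable def dist (hE : IsCubeChain E) : G → G → ℝ :=
  @Dist.dist G hE.pseudoMetricSpace.toDist

theorem dist_le (hE : IsCubeChain E) (x y : G) : hE.dist x y ≤ chainGauge E (x⁻¹ * y) :=
  PseudoMetricSpace.dist_ofPreNNDist_le _ _ _ x y

theorem chainGauge_le_two_mul_dist (hE : IsCubeChain E) (hcover : ∀ g, ∃ n, g ∈ E n) (x y : G) :
    chainGauge E (x⁻¹ * y) ≤ 2 * hE.dist x y :=
  PseudoMetricSpace.le_two_mul_dist_ofPreNNDist _ _ _ (fun x₁ x₂ x₃ x₄ => by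
    simpa only [mul_assoc, mul_inv_cancel_left] using
      hE.chainGauge_mul_mul_le hcover (x₁⁻¹ * x₂) (x₂⁻¹ * x₃) (x₃⁻¹ * x₄)) x y

theorem dist_mul_mul (hE : IsCubeChain E) (g x y : G) : hE.dist (g * x) (g * y) = hE.dist x y :=
  PseudoMetricSpace.dist_ofPreNNDist_map_map _ _ _ (mul_left_surjective g)
    (fun x y => by simp only [mul_inv_rev, mul_assoc, inv_mul_cancel_left]) x y

variable [TopologicalSpace G] [IsTopologicalGroup G]

theorem isContLeftInvPseudometric_dist (hE : IsCubeChain E) (hnhds : ∀ n, E n ∈ 𝓝 1) :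
    IsContLeftInvPseudometric G hE.dist := by
  let := hE.pseudoMetricSpace
  have h1 : Tendsto (hE.dist 1) (𝓝 1) (𝓝 0) :=
    squeeze_zero (fun _ => dist_nonneg) (fun g => by simpa using hE.dist_le 1 g)
      (NNReal.tendsto_coe.2 (tendsto_chainGauge_nhds_one hnhds))
  exact ⟨continuous_of_tendsto_one dist_comm dist_triangle hE.dist_mul_mul h1, dist_self,
    dist_comm, fun _ _ => dist_nonneg, dist_triangle, hE.dist_mul_mul⟩

end IsCubeChain

theorem IsCoarselyBounded.exists_subset_of_isCubeChain {G : Type*} [Group G] [TopologicalSpace G]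
    [IsTopologicalGroup G] {A : Set G} (hA : IsCoarselyBounded G A) {E : ℤ → Set G}
    (hE : IsCubeChain E) (hcover : ∀ g, ∃ n, g ∈ E n) (hnhds : ∀ n, E n ∈ 𝓝 1) :
    ∃ n : ℕ, A ⊆ E n := by
  obtain ⟨R, hR⟩ := hA.exists_forall_le (hE.isContLeftInvPseudometric_dist hnhds) 1
  obtain ⟨n, hn⟩ := pow_unbounded_of_one_lt (2 * R) (one_lt_two : (1 : ℝ) < 2)
  refine ⟨n, fun a ha => (hE.chainGauge_le_zpow_iff (hcover a) n).1 ?_⟩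
  rw [← NNReal.coe_le_coe]
  calc (chainGauge E a : ℝ) = chainGauge E (1⁻¹ * a) := by rw [inv_one, one_mul]
    _ ≤ 2 * hE.dist 1 a := hE.chainGauge_le_two_mul_dist hcover 1 a
    _ ≤ 2 * R := by linarith [hR a ha]
    _ ≤ _ := by push_cast; exact hn.le

section Group

variable {G : Type*} [Group G]

def upChain (V : Set G) (c : ℕ → G) : ℕ → Set G
  | 0 => V
  | n + 1 => upChain V c n * upChain V c n * upChain V c n ∪ {c n, (c n)⁻¹}

theorem one_mem_upChain {V : Set G} (hV : (1 : G) ∈ V) (c : ℕ → G) (n : ℕ) :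
    (1 : G) ∈ upChain V c n := by
  induction n with
  | zero => exact hV
  | succ n ih => exact Or.inl (by simpa using mul_mem_mul (mul_mem_mul ih ih) ih)

theorem inv_upChain {V : Set G} (hV : V⁻¹ = V) (c : ℕ → G) (n : ℕ) :
    (upChain V c n)⁻¹ = upChain V c n := by
  induction n with
  | zero => exact hV
  | succ n ih =>
    simp only [upChain, union_inv, mul_inv_rev, ih, inv_insert, inv_singleton, inv_inv,
      mul_assoc, pair_comm]

def upChainLetters [DecidableEq G] (c : ℕ → G) (n : ℕ) : Finset G :=
  (Finset.range n).image c ∪ (Finset.range n).image fun j => (c j)⁻¹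

theorem upChainLetters_subset_succ [DecidableEq G] (c : ℕ → G) (n : ℕ) :
    upChainLetters c n ⊆ upChainLetters c (n + 1) := by
  unfold upChainLetters
  gcongr <;> simp

theorem exists_list_prod_eq_of_mem_upChain [DecidableEq G] {V : Set G} {c : ℕ → G} {n : ℕ}
    {g : G} (hg : g ∈ upChain V c n) :
    ∃ l : List G, l.length ≤ 3 ^ n ∧ (∀ s ∈ l, s ∈ V ∨ s ∈ upChainLetters c n) ∧ l.prod = g := by
  induction n generalizing g with
  | zero => exact ⟨[g], by simp, fun s hs => Or.inl (List.mem_singleton.1 hs ▸ hg), by simp⟩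
  | succ n ih =>
    obtain ⟨_, ⟨x, hx, y, hy, rfl⟩, z, hz, rfl⟩ | hg := hg
    · obtain ⟨lx, hlx, hlx', rfl⟩ := ih hx
      obtain ⟨ly, hly, hly', rfl⟩ := ih hy
      obtain ⟨lz, hlz, hlz', rfl⟩ := ih hz
      have hsub := upChainLetters_subset_succ c n
      refine ⟨lx ++ ly ++ lz, by simp only [List.length_append, pow_succ]; omega, ?_,
        by simp [mul_assoc]⟩
      simp only [List.mem_append]
      rintro s ((hs | hs) | hs)
      exacts [(hlx' s hs).imp_right (hsub ·), (hly' s hs).imp_right (hsub ·),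
        (hlz' s hs).imp_right (hsub ·)]
    · refine ⟨[g], by simp [Nat.one_le_pow], ?_, by simp⟩
      simp only [List.mem_singleton, forall_eq]
      have hn := Finset.self_mem_range_succ n
      rcases hg with rfl | rfl
      exacts [Or.inr (Finset.mem_union_left _ (Finset.mem_image_of_mem _ hn)),
        Or.inr (Finset.mem_union_right _ (Finset.mem_image_of_mem _ hn))]

theorem exists_ofFn_mul_eq_prod {U F : Set G} (h1U : (1 : G) ∈ U) (l : List G)
    (hl : ∀ s ∈ l, s ∈ U ∨ s ∈ F) :
    ∃ f u : Fin l.length → G, (∀ i, f i ∈ insert 1 F) ∧ (∀ i, u i ∈ U) ∧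
      l.prod = (List.ofFn fun i => f i * u i).prod := by
  classical
  refine ⟨fun i => if l[i] ∈ F then l[i] else 1, fun i => if l[i] ∈ F then 1 else l[i],
    fun i => ?_, fun i => ?_, ?_⟩
  · dsimp only
    split_ifs with h
    exacts [mem_insert_of_mem _ h, mem_insert _ _]
  · dsimp only
    split_ifs with h
    exacts [h1U, (hl _ (List.getElem_mem _)).resolve_right h]
  · conv_lhs => rw [← List.ofFn_getElem (xs := l)]
    congr 2
    funext i
    dsimp only
    split_ifs <;> simp

def intChain (W : ℕ → Set G) (c : ℕ → G) : ℤ → Set G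
  | (n : ℕ) => upChain (W 0) c n
  | Int.negSucc n => W (n + 1)

variable {W : ℕ → Set G}

theorem isCubeChain_intChain (hW1 : ∀ n, (1 : G) ∈ W n) (hWinv : ∀ n, (W n)⁻¹ = W n)
    (hWcube : ∀ n, W (n + 1) * W (n + 1) * W (n + 1) ⊆ W n) (c : ℕ → G) :
    IsCubeChain (intChain W c) where
  one_mem
    | (n : ℕ) => one_mem_upChain (hW1 0) c n
    | Int.negSucc n => hW1 (n + 1)
  inv_eq
    | (n : ℕ) => inv_upChain (hWinv 0) c n
    | Int.negSucc n => hWinv (n + 1)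
  mul_mul_subset
    | (n : ℕ) => subset_union_left
    | Int.negSucc 0 => hWcube 0
    | Int.negSucc (n + 1) => hWcube (n + 1)

theorem subset_iUnion_intChain (W : ℕ → Set G) (c : ℕ → G) :
    W 0 ∪ range c ⊆ ⋃ n, intChain W c n :=
  union_subset (subset_iUnion_of_subset 0 subset_rfl) <| range_subset_iff.2 fun j =>
    mem_iUnion.2 ⟨((j + 1 : ℕ) : ℤ), Or.inr (mem_insert _ _)⟩

theorem intChain_mem_nhds [TopologicalSpace G] {c : ℕ → G} (hE : IsCubeChain (intChain W c))
    (hW : ∀ n, W n ∈ 𝓝 1) : ∀ n, intChain W c n ∈ 𝓝 1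
  | (n : ℕ) => mem_of_superset (hW 0) (hE.monotone (Int.natCast_nonneg n))
  | Int.negSucc n => hW (n + 1)

end Group

section TopologicalGroup

variable {G : Type*} [Group G] [TopologicalSpace G] [IsTopologicalGroup G]

theorem exists_nhds_one_inv_eq_mul_mul_subset {U : Set G} (hU : U ∈ 𝓝 1) :
    ∃ V ∈ 𝓝 (1 : G), V⁻¹ = V ∧ V * V * V ⊆ U := by
  obtain ⟨V, hV, -, -, hVU⟩ := exists_closed_nhds_one_inv_eq_mul_subset hU
  obtain ⟨T, hT, -, hTinv, hTV⟩ := exists_closed_nhds_one_inv_eq_mul_subset hV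
  have hTV' : T ⊆ V := (subset_mul_left T (mem_of_mem_nhds hT)).trans hTV
  exact ⟨T, hT, hTinv, (mul_subset_mul hTV hTV').trans hVU⟩

theorem exists_nhds_one_seq_mul_mul_subset {U : Set G} (hU : U ∈ 𝓝 1) :
    ∃ W : ℕ → Set G, W 0 ⊆ U ∧ (∀ n, W n ∈ 𝓝 1) ∧ (∀ n, (W n)⁻¹ = W n) ∧
      ∀ n, W (n + 1) * W (n + 1) * W (n + 1) ⊆ W n := by
  choose! T hT using fun S (hS : S ∈ 𝓝 (1 : G)) => exists_nhds_one_inv_eq_mul_mul_subset hS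
  have hmem : ∀ n, T^[n] U ∈ 𝓝 1 := fun n => by
    induction n with
    | zero => exact hU
    | succ n ih => rw [Function.iterate_succ_apply']; exact (hT _ ih).1
  refine ⟨fun n => T^[n + 1] U, ?_, fun n => hmem (n + 1), fun n => ?_, fun n => ?_⟩
  · exact subset_of_one_mem_of_mul_mul_subset (mem_of_mem_nhds (hT U hU).1) (hT U hU).2.2
  · simp only [Function.iterate_succ_apply']
    exact (hT _ (hmem n)).2.1
  · simp only [Function.iterate_succ_apply' T (n + 1)]
    exact (hT _ (hmem (n + 1))).2.2

end TopologicalGroup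

/-- If `G` is countably generated over every identity neighborhood, then every
coarsely bounded subset of `G` satisfies Rosendal's criterion. -/
theorem rosendal_criterion_of_isCoarselyBounded {G : Type*} [Group G] [TopologicalSpace G]
    [IsTopologicalGroup G]
    (hG : ∀ U ∈ nhds (1 : G), ∃ C : Set G, C.Countable ∧ Subgroup.closure (U ∪ C) = ⊤)
    (A : Set G) (hA : IsCoarselyBounded G A) :
    ∀ U ∈ nhds (1 : G), ∃ (F : Finset G) (k : ℕ),
      ∀ a ∈ A, ∃ ℓ : ℕ, ℓ ≤ k ∧ ∃ f u : Fin ℓ → G,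
        (∀ i, f i ∈ F) ∧ (∀ i, u i ∈ U) ∧
        a = (List.ofFn fun i => f i * u i).prod := by
  classical
  intro U hU
  obtain ⟨W, hWU, hWnhds, hWinv, hWcube⟩ := exists_nhds_one_seq_mul_mul_subset hU
  obtain ⟨C, hC, hgen⟩ := hG (W 0) (hWnhds 0)
  obtain ⟨c, hCc⟩ := countable_iff_exists_subset_range.1 hC
  have hE := isCubeChain_intChain (fun n => mem_of_mem_nhds (hWnhds n)) hWinv hWcube c
  have hcover := hE.exists_mem_of_closure_eq_top (subset_iUnion_intChain W c)
    (eq_top_iff.2 (hgen.ge.trans (Subgroup.closure_mono (union_subset_union_right _ hCc))))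
  obtain ⟨n, hAn⟩ := hA.exists_subset_of_isCubeChain hE hcover (intChain_mem_nhds hE hWnhds)
  refine ⟨insert 1 (upChainLetters c n), 3 ^ n, fun a ha => ?_⟩
  obtain ⟨l, hlen, hl, rfl⟩ := exists_list_prod_eq_of_mem_upChain (hAn ha)
  obtain ⟨f, u, hf, hu, hprod⟩ := exists_ofFn_mul_eq_prod (mem_of_mem_nhds hU) l
    (fun s hs => (hl s hs).imp_left (hWU ·))
  exact ⟨l.length, hlen, f, u, fun i => by simpa using hf i, hu, hprod⟩
end

section
/- (Milnor–Schwarz Lemma, Rosendal form) Let G be a topological group acting continuously, coboundedly, and by isometries on a geodesic metric space X, and suppose the action is metrically coarsely proper: for each R > 0 and x ∈ X, the set {g ∈ G : (g · B_R(x)) ∩ B_R(x) ≠ ∅} is coarsely bounded in G. Fix x ∈ X and define d_{X,x}(g, h) = d_X(g·x, h·x). Then d_{X,x} is a continuous left-invariant pseudometric on G, and for every continuous left-invariant pseudometric d' on G there exist L > 0 and K ≥ 0 with d'(g, h) ≤ L · d_{X,x}(g, h) + K for all g, h ∈ G; i.e., d_{X,x} is a maximum element of the poset of continuous left-invariant pseudometrics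 on G, so G admits the geometry of X. -/
open Pointwise

/-
The orbit map is continuous and `G` acts by isometries, so `d_{X,x}` is a continuous
left-invariant pseudometric. Conversely, fix `R` such that the translates of `B_R(x)` cover `X`.
Walking along a geodesic from `x` to `g • x`, every `g` splits as `g = h * s` where `h • x` is
`R` closer to `x` than `g • x` and `s` moves `x` by less than `3R`. By coarse properness the
elements of the latter kind have `d'`-length at most some `M`, so induction on `⌈d(x, g • x) / R⌉`
bounds the `d'`-length of `g` linearly in `d(x, g • x)`.
-/

namespace IsContLeftInvPseudometric

variable {G : Type*} [Group G] [TopologicalSpace G] {d : G → G → ℝ}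

lemma eq_one_inv_mul (hd : IsContLeftInvPseudometric G d) (g h : G) :
    d g h = d 1 (g⁻¹ * h) := by
  simpa only [mul_one, mul_inv_cancel_left] using hd.left_inv g 1 (g⁻¹ * h)

lemma one_mul_le_add (hd : IsContLeftInvPseudometric G d) (g h : G) :
    d 1 (g * h) ≤ d 1 g + d 1 h := by
  calc d 1 (g * h) ≤ d 1 g + d g (g * h) := hd.triangle _ _ _
    _ = d 1 g + d 1 h := by rw [hd.eq_one_inv_mul g, inv_mul_cancel_left]

end IsContLeftInvPseudometric

lemma exists_dist_eq_of_geodesic {X : Type*} [MetricSpace X]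
    (hgeo : ∀ a b : X, ∃ γ : ℝ → X, γ 0 = a ∧ γ (dist a b) = b ∧
      ∀ s ∈ Set.Icc (0 : ℝ) (dist a b), ∀ t ∈ Set.Icc (0 : ℝ) (dist a b),
        dist (γ s) (γ t) = |s - t|)
    (a b : X) {t : ℝ} (ht : t ∈ Set.Icc 0 (dist a b)) :
    ∃ y, dist a y = t ∧ dist y b = dist a b - t := by
  obtain ⟨γ, hγ0, hγ1, hγ⟩ := hgeo a b
  have h0 : (0 : ℝ) ∈ Set.Icc 0 (dist a b) := ⟨le_rfl, dist_nonneg⟩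
  have h1 : dist a b ∈ Set.Icc 0 (dist a b) := ⟨dist_nonneg, le_rfl⟩
  refine ⟨γ t, ?_, ?_⟩
  · rw [← hγ0, hγ 0 h0 t ht, zero_sub, abs_neg, abs_of_nonneg ht.1]
  · rw [← hγ1, hγ t ht _ h1, hγ1, abs_sub_comm, abs_of_nonneg (sub_nonneg.2 ht.2)]

section OrbitBounds

variable {G X : Type*} [Group G] [MetricSpace X] [MulAction G X]

lemma pos_of_forall_exists_dist_smul_lt {x : X} {R : ℝ}
    (hcob : ∀ y : X, ∃ g : G, dist y (g • x) < R) : 0 < R :=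
  let ⟨_, hg⟩ := hcob x
  dist_nonneg.trans_lt hg

variable (hiso : ∀ (g : G) (a b : X), dist (g • a) (g • b) = dist a b)
include hiso

lemma dist_smul_inv_mul (x : X) (g h : G) :
    dist x ((g⁻¹ * h) • x) = dist (g • x) (h • x) := by
  rw [← hiso g, smul_smul, mul_inv_cancel_left]

lemma exists_lt_dist_of_cobounded
    (hcobdd : ∃ (x₀ : X) (R : ℝ), 0 < R ∧ ∀ y : X, ∃ g : G, y ∈ g • Metric.ball x₀ R)
    (x : X) : ∃ R : ℝ, 0 < R ∧ ∀ y : X, ∃ g : G, dist y (g • x) < R := by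
  obtain ⟨x₀, R, hR, hcover⟩ := hcobdd
  refine ⟨R + dist x₀ x, by positivity, fun y => ?_⟩
  obtain ⟨g, z, hz, rfl⟩ := hcover y
  refine ⟨g, ?_⟩
  rw [hiso]
  linarith [dist_triangle z x₀ x, Metric.mem_ball.1 hz]

variable (hgeo : ∀ a b : X, ∃ γ : ℝ → X, γ 0 = a ∧ γ (dist a b) = b ∧
      ∀ s ∈ Set.Icc (0 : ℝ) (dist a b), ∀ t ∈ Set.Icc (0 : ℝ) (dist a b),
        dist (γ s) (γ t) = |s - t|)
  {x : X} {R : ℝ} (hcob : ∀ y : X, ∃ g : G, dist y (g • x) < R)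
include hgeo hcob

lemma exists_mul_eq_of_two_mul_le_dist {g : G} (hg : 2 * R ≤ dist x (g • x)) :
    ∃ h s : G, g = h * s ∧ dist x (h • x) < dist x (g • x) - R ∧ dist x (s • x) < 3 * R := by
  have hR : 0 < R := pos_of_forall_exists_dist_smul_lt hcob
  obtain ⟨y, hxy, hyg⟩ := exists_dist_eq_of_geodesic hgeo x (g • x)
    (t := dist x (g • x) - 2 * R) ⟨by linarith, by linarith⟩
  obtain ⟨h, hyh⟩ := hcob y
  refine ⟨h, h⁻¹ * g, (mul_inv_cancel_left h g).symm, ?_, ?_⟩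
  · linarith [dist_triangle x y (h • x)]
  · rw [dist_smul_inv_mul hiso]
    linarith [dist_triangle (h • x) y (g • x), dist_comm y (h • x)]

variable {f : G → ℝ} (hf : ∀ g h, f (g * h) ≤ f g + f h) {M : ℝ} (hM₀ : 0 ≤ M)
  (hM : ∀ s : G, dist x (s • x) < 3 * R → f s ≤ M)
include hf hM₀ hM

lemma le_of_dist_lt_add_three_mul (n : ℕ) {g : G} (hg : dist x (g • x) < (n + 3) * R) :
    f g ≤ (n + 1) * M := by
  have hR : 0 < R := pos_of_forall_exists_dist_smul_lt hcob
  induction n generalizing g with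
  | zero => simpa using hM g (by simpa using hg)
  | succ n ih =>
    push_cast at hg ⊢
    by_cases hnear : dist x (g • x) < (n + 3) * R
    · linarith [ih hnear]
    · have hfar : 2 * R ≤ dist x (g • x) := by nlinarith [(n.cast_nonneg : (0 : ℝ) ≤ n)]
      obtain ⟨h, s, rfl, hh, hs⟩ := exists_mul_eq_of_two_mul_le_dist hiso hgeo hcob hfar
      linarith [hf h s, ih (g := h) (by linarith), hM s hs]

lemma le_div_mul_dist_add (g : G) : f g ≤ M / R * dist x (g • x) + 2 * M := by
  have hR : 0 < R := pos_of_forall_exists_dist_smul_lt hcob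
  set D := dist x (g • x)
  have hceil_le : D ≤ ⌈D / R⌉₊ * R := (div_le_iff₀ hR).1 (Nat.le_ceil _)
  have hceil_lt : (⌈D / R⌉₊ : ℝ) < D / R + 1 := Nat.ceil_lt_add_one (by positivity)
  calc f g ≤ (⌈D / R⌉₊ + 1) * M :=
        le_of_dist_lt_add_three_mul hiso hgeo hcob hf hM₀ hM _ (by linarith)
    _ ≤ (D / R + 2) * M := mul_le_mul_of_nonneg_right (by linarith) hM₀
    _ = M / R * D + 2 * M := by ring

end OrbitBounds

lemma isContLeftInvPseudometric_dist_smul {G X : Type*} [Group G] [TopologicalSpace G]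
    [MetricSpace X] [MulAction G X] (hcont : Continuous fun p : G × X => p.1 • p.2)
    (hiso : ∀ (g : G) (a b : X), dist (g • a) (g • b) = dist a b) (x : X) :
    IsContLeftInvPseudometric G (fun g h => dist (g • x) (h • x)) where
  continuous := (hcont.comp (continuous_fst.prodMk continuous_const)).dist
    (hcont.comp (continuous_snd.prodMk continuous_const))
  self _ := dist_self _
  symm _ _ := dist_comm _ _
  nonneg _ _ := dist_nonneg
  triangle _ _ _ := dist_triangle _ _ _
  left_inv g a b := by simp only [mul_smul, hiso]

lemma IsCoarselyBounded.exists_pos_bound_of_dist_smul_lt {G X : Type*} [Group G]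
    [TopologicalSpace G] [MetricSpace X] [MulAction G X] {x : X} {r : ℝ} (hr : 0 < r)
    (hB : IsCoarselyBounded G {g : G | (g • Metric.ball x r ∩ Metric.ball x r).Nonempty})
    {d : G → G → ℝ} (hd : IsContLeftInvPseudometric G d) :
    ∃ M, 0 < M ∧ ∀ s : G, dist x (s • x) < r → d 1 s ≤ M := by
  obtain ⟨M, hM⟩ := hB d hd
  have hx : x ∈ Metric.ball x r := Metric.mem_ball_self hr
  refine ⟨max M 1, by positivity, fun s hs => (hM 1 ⟨x, by rwa [one_smul], hx⟩ s ?_).trans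
    (le_max_left _ _)⟩
  exact ⟨s • x, Set.smul_mem_smul_set hx, by rwa [Metric.mem_ball, dist_comm]⟩

theorem milnor_schwarz_rosendal_general {G X : Type*} [Group G] [TopologicalSpace G]
    [MetricSpace X] [MulAction G X]
    (hcont : Continuous fun p : G × X => p.1 • p.2)
    (hiso : ∀ (g : G) (a b : X), dist (g • a) (g • b) = dist a b)
    (hgeo : ∀ a b : X, ∃ γ : ℝ → X, γ 0 = a ∧ γ (dist a b) = b ∧
      ∀ s ∈ Set.Icc (0 : ℝ) (dist a b), ∀ t ∈ Set.Icc (0 : ℝ) (dist a b),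
        dist (γ s) (γ t) = |s - t|)
    (hcobdd : ∃ (x₀ : X) (R : ℝ), 0 < R ∧ ∀ y : X, ∃ g : G, y ∈ g • Metric.ball x₀ R)
    (hproper : ∀ R : ℝ, 0 < R → ∀ y : X,
      IsCoarselyBounded G {g : G | (g • Metric.ball y R ∩ Metric.ball y R).Nonempty})
    (x : X) :
    IsContLeftInvPseudometric G (fun g h => dist (g • x) (h • x)) ∧
      ∀ d' : G → G → ℝ, IsContLeftInvPseudometric G d' →
        ∃ L K : ℝ, 0 < L ∧ 0 ≤ K ∧
          ∀ g h : G, d' g h ≤ L * dist (g • x) (h • x) + K := by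
  refine ⟨isContLeftInvPseudometric_dist_smul hcont hiso x, fun d' hd' => ?_⟩
  obtain ⟨R, hR, hcob⟩ := exists_lt_dist_of_cobounded hiso hcobdd x
  obtain ⟨M, hM, hbound⟩ :=
    (hproper (3 * R) (by positivity) x).exists_pos_bound_of_dist_smul_lt (by positivity) hd'
  refine ⟨M / R, 2 * M, by positivity, by positivity, fun g h => ?_⟩
  rw [hd'.eq_one_inv_mul, ← dist_smul_inv_mul hiso]
  exact le_div_mul_dist_add hiso hgeo hcob hd'.one_mul_le_add hM.le hbound _

/-- The Milnor–Schwarz Lemma, Rosendal form: if a topological group `G` acts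
continuously, coboundedly, metrically coarsely properly and by isometries on a
geodesic metric space `X`, then for any `x ∈ X` the orbit pseudometric
`(g, h) ↦ dist (g • x) (h • x)` is a continuous left-invariant pseudometric on `G`
which dominates every continuous left-invariant pseudometric on `G` up to constants;
i.e. `G` admits the geometry of `X`. -/
theorem milnor_schwarz_rosendal {G X : Type*} [Group G] [TopologicalSpace G]
    [IsTopologicalGroup G] [MetricSpace X] [MulAction G X]
    (hcont : Continuous fun p : G × X => p.1 • p.2)
    (hiso : ∀ (g : G) (a b : X), dist (g • a) (g • b) = dist a b)
    (hgeo : ∀ a b : X, ∃ γ : ℝ → X, γ 0 = a ∧ γ (dist a b) = b ∧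
      ∀ s ∈ Set.Icc (0 : ℝ) (dist a b), ∀ t ∈ Set.Icc (0 : ℝ) (dist a b),
        dist (γ s) (γ t) = |s - t|)
    (hcobdd : ∃ (x₀ : X) (R : ℝ), 0 < R ∧ ∀ y : X, ∃ g : G, y ∈ g • Metric.ball x₀ R)
    (hproper : ∀ R : ℝ, 0 < R → ∀ y : X,
      IsCoarselyBounded G {g : G | (g • Metric.ball y R ∩ Metric.ball y R).Nonempty})
    (x : X) :
    IsContLeftInvPseudometric G (fun g h => dist (g • x) (h • x)) ∧
      ∀ d' : G → G → ℝ, IsContLeftInvPseudometric G d' →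
        ∃ L K : ℝ, 0 < L ∧ 0 ≤ K ∧
          ∀ g h : G, d' g h ≤ L * dist (g • x) (h • x) + K :=
  milnor_schwarz_rosendal_general hcont hiso hgeo hcobdd hproper x
end
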